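/- arXiv:1205.5663 — 2 statements merged into one kernel-verified Lean document; each statement's English description precedes it below -/
import Mathlib

section
/- Let (α, β) ∈ △ have non-terminating triangle sequence (a₀, a₁, …). For each k ≥ 0 set N_k = a₀ + a₁ + ⋯ + a_k + (k+1) and let I = (1^{a₀}, 0, 1^{a₁}, 0, …, 1^{a_k}, 0) ∈ {0,1}^{N_k} be the binary string consisting of a₀ ones, a zero, a₁ ones, a zero, and so on. Then M*A^I = d_k, i.e. Tr(M (A^I)ᵀ) = (1, α, β)·C_k. -/
open Matrix Filter

noncomputable section

/-- The matrix `A₀` with rows (0,0,1), (1,0,−1), (0,1,0). -/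
def A0 : Matrix (Fin 3) (Fin 3) ℝ := !![0,0,1; 1,0,-1; 0,1,0]

/-- The matrix `A₁` with rows (1,0,0), (0,1,0), (−1,0,1). -/
def A1 : Matrix (Fin 3) (Fin 3) ℝ := !![1,0,0; 0,1,0; -1,0,1]

/-- `Amat 0 = A₀`, `Amat 1 = A₁`. -/
def Amat : Fin 2 → Matrix (Fin 3) (Fin 3) ℝ := ![A0, A1]

/-- The matrix `M` with rows (0,0,1), (0,0,α), (0,0,β). -/
def Mmat (α β : ℝ) : Matrix (Fin 3) (Fin 3) ℝ := !![0,0,1; 0,0,α; 0,0,β]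

/-- Hilbert–Schmidt (Hadamard) product `A*B = Tr(A Bᵀ)`. -/
def HS (A B : Matrix (Fin 3) (Fin 3) ℝ) : ℝ := (A * Bᵀ).trace

/-- The triangle `△ = {(x,y) : 1 ≥ x ≥ y > 0}`. -/
def tri : Set (ℝ × ℝ) := {p | 1 ≥ p.1 ∧ p.1 ≥ p.2 ∧ p.2 > 0}

/-- The subtriangle `△_k = {(x,y) ∈ △ : 1 − x − ky ≥ 0 > 1 − x − (k+1)y}`. -/
def triSub (k : ℕ) : Set (ℝ × ℝ) :=
  {p | p ∈ tri ∧ 1 - p.1 - (k : ℝ) * p.2 ≥ 0 ∧ 0 > 1 - p.1 - ((k : ℝ) + 1) * p.2}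

/-- The index `k` with `(x,y) ∈ △_k`, i.e. `⌊(1-x)/y⌋`. -/
def triIndex (p : ℝ × ℝ) : ℤ := ⌊(1 - p.1) / p.2⌋

/-- The triangle map `T`, sending `(α, β) ∈ △_k` to `(β/α, (1 − α − kβ)/α)`. -/
def T (p : ℝ × ℝ) : ℝ × ℝ :=
  (p.2 / p.1, (1 - p.1 - (triIndex p : ℝ) * p.2) / p.1)

/-- The vectors `C_k` (with indices shifted by 3):
`Cvec a 0 = C₋₃`, `Cvec a 1 = C₋₂`, `Cvec a 2 = C₋₁`, `Cvec a (k+3) = C_k`. -/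
def Cvec (a : ℕ → ℕ) : ℕ → Fin 3 → ℝ
  | 0 => ![1, 0, 0]
  | 1 => ![0, 1, 0]
  | 2 => ![0, 0, 1]
  | (n + 3) => Cvec a n - Cvec a (n + 1) - (a n : ℝ) • Cvec a (n + 2)

/-- `d_k = (1, α, β) · C_k`, with the index shifted by 3: `dvec a α β (k+3) = d_k`. -/
def dvec (a : ℕ → ℕ) (α β : ℝ) (n : ℕ) : ℝ := ![1, α, β] ⬝ᵥ Cvec a n

/-- The binary string `(1^{a₀}, 0, 1^{a₁}, 0, …, 1^{a_k}, 0)`: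
`a₀` ones, a zero, `a₁` ones, a zero, and so on. -/
def bitString (a : ℕ → ℕ) (k : ℕ) : List (Fin 2) :=
  (List.ofFn fun j : Fin (k + 1) => List.replicate (a j) (1 : Fin 2) ++ [(0 : Fin 2)]).flatten

/-! The column recursion `C_k = C_{k−3} − C_{k−2} − a_k C_{k−1}` is exactly right multiplication by
the block `A₁^{a_k} A₀`, which shifts the columns left and puts `C_{k−3} − C_{k−2} − a_k C_{k−1}` into
the last one. Hence `A^I` is the matrix with columns `C_{k−2}, C_{k−1}, C_k`, and pairing with `M`,
whose only nonzero column is `(1, α, β)`, reads off `(1, α, β)·C_k`. -/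

lemma A1_pow (m : ℕ) : A1 ^ m = !![1, 0, 0; 0, 1, 0; -(m : ℝ), 0, 1] := by
  induction m with
  | zero => simp [Matrix.one_fin_three]
  | succ m ih =>
    rw [pow_succ, ih]
    simp [A1]
    ring

lemma A1_pow_mul_A0 (m : ℕ) : A1 ^ m * A0 = !![0, 0, 1; 1, 0, -1; 0, 1, -(m : ℝ)] := by
  simp [A1_pow, A0]

lemma prod_map_Amat_block (m : ℕ) :
    ((List.replicate m (1 : Fin 2) ++ [0]).map Amat).prod = A1 ^ m * A0 := by
  simp [List.map_replicate, List.prod_replicate, Amat]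

lemma bitString_zero (a : ℕ → ℕ) : bitString a 0 = List.replicate (a 0) 1 ++ [0] := by
  simp [bitString]

lemma bitString_succ (a : ℕ → ℕ) (k : ℕ) :
    bitString a (k + 1) = bitString a k ++ (List.replicate (a (k + 1)) 1 ++ [0]) := by
  unfold bitString
  rw [List.ofFn_succ']
  simp

lemma length_bitString (a : ℕ → ℕ) (k : ℕ) :
    (bitString a k).length = (∑ j ∈ Finset.range (k + 1), a j) + (k + 1) := by
  induction k with
  | zero => simp [bitString_zero]
  | succ k ih =>
    rw [bitString_succ, List.length_append, ih, Finset.sum_range_succ _ (k + 1)]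
    simp only [List.length_append, List.length_replicate, List.length_cons, List.length_nil]
    omega

def Cmat (a : ℕ → ℕ) (n : ℕ) : Matrix (Fin 3) (Fin 3) ℝ :=
  (Matrix.of fun j : Fin 3 => Cvec a (n + j))ᵀ

lemma Cmat_zero (a : ℕ → ℕ) : Cmat a 0 = 1 := by
  ext i j
  fin_cases i <;> fin_cases j <;> rfl

lemma Cmat_succ (a : ℕ → ℕ) (n : ℕ) : Cmat a (n + 1) = Cmat a n * (A1 ^ a n * A0) := by
  rw [A1_pow_mul_A0]
  ext i j
  fin_cases j
  · simp [Cmat, Matrix.mul_apply, Fin.sum_univ_three]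
  · simp [Cmat, Matrix.mul_apply, Fin.sum_univ_three]
  · simp [Cmat, Matrix.mul_apply, Fin.sum_univ_three, Cvec]
    ring

lemma prod_map_Amat_bitString (a : ℕ → ℕ) (k : ℕ) :
    ((bitString a k).map Amat).prod = Cmat a (k + 1) := by
  induction k with
  | zero => rw [bitString_zero, prod_map_Amat_block, Cmat_succ, Cmat_zero, one_mul]
  | succ k ih => rw [bitString_succ, List.map_append, List.prod_append, ih,
      prod_map_Amat_block, Cmat_succ a (k + 1)]

lemma HS_Mmat (α β : ℝ) (P : Matrix (Fin 3) (Fin 3) ℝ) :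
    HS (Mmat α β) P = ![1, α, β] ⬝ᵥ Pᵀ 2 := by
  simp [HS, Mmat, Matrix.trace_fin_three, Matrix.vecMul, Fin.sum_univ_three, dotProduct]

theorem HS_bitString_eq_d_general (α β : ℝ) (a : ℕ → ℕ) (k : ℕ) :
    (bitString a k).length = (∑ j ∈ Finset.range (k + 1), a j) + (k + 1) ∧
    HS (Mmat α β) ((bitString a k).map Amat).prod = dvec a α β (k + 3) :=
  ⟨length_bitString a k, by
    rw [prod_map_Amat_bitString, HS_Mmat, Cmat, Matrix.transpose_transpose]
    rfl⟩

/-- For `(α, β) ∈ △` with non-terminating triangle sequence `(a₀, a₁, …)`, the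
string `I = (1^{a₀}, 0, …, 1^{a_k}, 0)` has length `N_k = a₀ + ⋯ + a_k + (k+1)`
and satisfies `M*A^I = Tr(M (A^I)ᵀ) = d_k = (1, α, β)·C_k`. -/
theorem HS_bitString_eq_d (α β : ℝ) (a : ℕ → ℕ)
    (hseq : ∀ n : ℕ, T^[n] (α, β) ∈ triSub (a n)) (k : ℕ) :
    (bitString a k).length = (∑ j ∈ Finset.range (k + 1), a j) + (k + 1) ∧
    HS (Mmat α β) ((bitString a k).map Amat).prod = dvec a α β (k + 3) :=
  HS_bitString_eq_d_general α β a k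

end
end

section
/- Fix an integer k ≥ 0. (i) The triangle map T is injective on △_k. (ii) For every (x, y) ∈ △ with y < x, the point S_k(x, y) := (1/(1 + kx + y), x/(1 + kx + y)) lies in △_k and satisfies T(S_k(x, y)) = (x, y). -/
open Matrix Filter

noncomputable section

/-- `X_n = C_n × C_{n+1}`, with the index shifted by 2: `Xvec a (n+2) = X_n`
(`X_n` is defined for `n ≥ -2`). -/
def Xvec (a : ℕ → ℕ) (n : ℕ) : Fin 3 → ℝ :=
  crossProduct (Cvec a (n + 1)) (Cvec a (n + 2))

/-! On `△_k` the floor in `triIndex` equals `k`, so `T` is the explicit map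
`(α, β) ↦ (β/α, (1 - α - kβ)/α)`. Its inverse is `S_k`, because the denominator of `S_k` at
`T(α, β)` is `1 + kβ/α + (1 - α - kβ)/α = 1/α`. -/

def triBranch (c : ℝ) (p : ℝ × ℝ) : ℝ × ℝ :=
  (p.2 / p.1, (1 - p.1 - c * p.2) / p.1)

/-- For `c = k` this is the map `S_k` of the statement. -/
def triSection (c : ℝ) (p : ℝ × ℝ) : ℝ × ℝ :=
  (1 / (1 + c * p.1 + p.2), p.1 / (1 + c * p.1 + p.2))

lemma triIndex_eq_of_mem_triSub {k : ℕ} {p : ℝ × ℝ} (hp : p ∈ triSub k) : triIndex p = k := by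
  obtain ⟨⟨-, -, hβ⟩, hk, hk1⟩ := hp
  rw [triIndex, Int.floor_eq_iff, Int.cast_natCast, le_div_iff₀ hβ, div_lt_iff₀ hβ]
  constructor <;> linarith

lemma T_eq_triBranch_of_mem_triSub {k : ℕ} {p : ℝ × ℝ} (hp : p ∈ triSub k) :
    T p = triBranch k p := by
  rw [T, triBranch, triIndex_eq_of_mem_triSub hp, Int.cast_natCast]

lemma triSection_triBranch (c : ℝ) {p : ℝ × ℝ} (hp : p.1 ≠ 0) :
    triSection c (triBranch c p) = p := by
  have hD : 1 + c * (p.2 / p.1) + (1 - p.1 - c * p.2) / p.1 = 1 / p.1 := by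
    field_simp
    ring
  ext <;> simp only [triSection, triBranch, hD] <;> field_simp

lemma triBranch_triSection (c : ℝ) {p : ℝ × ℝ} (hD : 1 + c * p.1 + p.2 ≠ 0) :
    triBranch c (triSection c p) = p := by
  simp only [triSection, triBranch]
  set D := 1 + c * p.1 + p.2 with hD_def
  ext
  · field_simp
  · field_simp
    rw [hD_def]
    ring

lemma triSection_mem_triSub (k : ℕ) {p : ℝ × ℝ} (hp : p ∈ tri) (hlt : p.2 < p.1) :
    triSection k p ∈ triSub k := by
  obtain ⟨hx1, -, hy⟩ := hp
  have hkx : 0 ≤ (k : ℝ) * p.1 := mul_nonneg k.cast_nonneg (hy.trans hlt).le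
  have hD : 0 < 1 + (k : ℝ) * p.1 + p.2 := by linarith
  refine ⟨⟨?_, ?_, ?_⟩, ?_, ?_⟩ <;> simp only [triSection]
  · rw [ge_iff_le, div_le_one hD]
    linarith
  · exact div_le_div_of_nonneg_right hx1 hD.le
  · exact div_pos (by linarith) hD
  · have : 1 - 1 / (1 + k * p.1 + p.2) - k * (p.1 / (1 + k * p.1 + p.2)) =
        p.2 / (1 + k * p.1 + p.2) := by field_simp; ring
    rw [this]
    positivity
  · have : 1 - 1 / (1 + k * p.1 + p.2) - (k + 1) * (p.1 / (1 + k * p.1 + p.2)) =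
        (p.2 - p.1) / (1 + k * p.1 + p.2) := by field_simp; ring
    rw [this]
    exact div_neg_of_neg_of_pos (by linarith) hD

lemma triSection_leftInvOn_T (k : ℕ) : Set.LeftInvOn (triSection k) T (triSub k) :=
  fun p hp => by
    rw [T_eq_triBranch_of_mem_triSub hp]
    exact triSection_triBranch k (hp.1.2.2.trans_le hp.1.2.1).ne'

lemma T_triSection (k : ℕ) {p : ℝ × ℝ} (hp : p ∈ tri) (hlt : p.2 < p.1) :
    T (triSection k p) = p := by
  have hkx : 0 ≤ (k : ℝ) * p.1 := mul_nonneg k.cast_nonneg (hp.2.2.trans hlt).le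
  rw [T_eq_triBranch_of_mem_triSub (triSection_mem_triSub k hp hlt)]
  exact triBranch_triSection k (by linarith [hp.2.2])

/-- (i) The triangle map `T` is injective on `△_k`.
(ii) For every `(x, y) ∈ △` with `y < x`, the point
`S_k(x,y) = (1/(1 + kx + y), x/(1 + kx + y))` lies in `△_k` and `T(S_k(x,y)) = (x,y)`. -/
theorem T_injOn_and_section (k : ℕ) :
    Set.InjOn T (triSub k) ∧
    ∀ p : ℝ × ℝ, p ∈ tri → p.2 < p.1 →
      ((1 / (1 + (k : ℝ) * p.1 + p.2), p.1 / (1 + (k : ℝ) * p.1 + p.2)) ∈ triSub k ∧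
       T (1 / (1 + (k : ℝ) * p.1 + p.2), p.1 / (1 + (k : ℝ) * p.1 + p.2)) = p) := by
  exact ⟨(triSection_leftInvOn_T k).injOn,
    fun p hp hlt => ⟨triSection_mem_triSub k hp hlt, T_triSection k hp hlt⟩⟩

end
end
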